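/- If w ∈ H¹ₑₓ(ℝ), then for every x ∈ ℝ, eˣ w(x)² ≤ ∫ₓ^∞ e^y w'(y)² dy. -/

import Mathlib

/-! Put `F y = eʸ w(y)²`. Then `F' = eʸ (w² + 2 w w') ≥ -eʸ w'²`, since `(w + w')² ≥ 0`. Both `F`
and `F'` are integrable, so `F` vanishes at `+∞` and `F x = -∫ₓ^∞ F' ≤ ∫ₓ^∞ eʸ w'²`. -/

open MeasureTheory Real Filter Set Topology

theorem integral_Ioi_eq_neg_of_hasDerivAt_of_integrableOn {E : Type*} [NormedAddCommGroup E]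
    [NormedSpace ℝ E] [CompleteSpace E] {f f' : ℝ → E} {a : ℝ}
    (hderiv : ∀ x ∈ Ici a, HasDerivAt f (f' x) x)
    (f'int : IntegrableOn f' (Ioi a)) (fint : IntegrableOn f (Ioi a)) :
    ∫ x in Ioi a, f' x = -f a := by
  have hlim : Tendsto f atTop (𝓝 0) :=
    tendsto_zero_of_hasDerivAt_of_integrableOn_Ioi
      (fun x hx => hderiv x (Ioi_subset_Ici_self hx)) f'int fint
  simpa using integral_Ioi_of_hasDerivAt_of_tendsto' hderiv f'int hlim

theorem hasDerivAt_exp_mul_sq {w : ℝ → ℝ} {w' y : ℝ} (hw : HasDerivAt w w' y) :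
    HasDerivAt (fun y => exp y * w y ^ 2) (exp y * (w y ^ 2 + 2 * w y * w')) y := by
  refine ((hasDerivAt_exp y).mul (hw.pow 2)).congr_deriv ?_
  simp only [Pi.pow_apply]
  ring

theorem neg_mul_sq_le_mul_sq_add_two_mul {c : ℝ} (hc : 0 ≤ c) (a b : ℝ) :
    -(c * b ^ 2) ≤ c * (a ^ 2 + 2 * a * b) := by
  nlinarith [mul_nonneg hc (sq_nonneg (a + b))]

theorem stmt_5 (w : ℝ → ℝ)
    (hw : Differentiable ℝ w)
    (hH1 : Integrable (fun x => Real.exp x * ((w x)^2 + (deriv w x)^2))) :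
    ∀ x : ℝ, Real.exp x * (w x)^2 ≤ ∫ y in Set.Ioi x, Real.exp y * (deriv w y)^2 := by
  intro x
  have hmw : Measurable w := hw.continuous.measurable
  have hmw' : Measurable (deriv w) := measurable_deriv w
  have hF : Integrable (fun y => exp y * w y ^ 2) :=
    hH1.mono' (by fun_prop) (ae_of_all _ fun y => by
      rw [norm_of_nonneg (by positivity)]
      nlinarith [mul_nonneg (exp_pos y).le (sq_nonneg (deriv w y))])
  have hG : Integrable (fun y => exp y * deriv w y ^ 2) :=
    hH1.mono' (by fun_prop) (ae_of_all _ fun y => by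
      rw [norm_of_nonneg (by positivity)]
      nlinarith [mul_nonneg (exp_pos y).le (sq_nonneg (w y))])
  have hF' : Integrable (fun y => exp y * (w y ^ 2 + 2 * w y * deriv w y)) :=
    (hH1.const_mul 2).mono' (by fun_prop) (ae_of_all _ fun y => by
      rw [norm_eq_abs, abs_le]
      constructor <;>
        nlinarith [mul_nonneg (exp_pos y).le (sq_nonneg (w y + deriv w y)),
          mul_nonneg (exp_pos y).le (sq_nonneg (w y - deriv w y))])
  calc exp x * w x ^ 2
      = -∫ y in Ioi x, exp y * (w y ^ 2 + 2 * w y * deriv w y) := by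
        rw [integral_Ioi_eq_neg_of_hasDerivAt_of_integrableOn
          (fun y _ => hasDerivAt_exp_mul_sq (hw y).hasDerivAt) hF'.integrableOn hF.integrableOn,
          neg_neg]
    _ ≤ -∫ y in Ioi x, -(exp y * deriv w y ^ 2) :=
        neg_le_neg <| setIntegral_mono_on hG.neg.integrableOn hF'.integrableOn measurableSet_Ioi
          fun y _ => neg_mul_sq_le_mul_sq_add_two_mul (exp_pos y).le _ _
    _ = ∫ y in Ioi x, exp y * deriv w y ^ 2 := by rw [integral_neg, neg_neg]
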